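/- Let F_i ∈ ℚ[Y] be defined by F_0(Y) = Y − 1 and F_{i+1}(Y) = (Y² − Y) · Y · F_i′(Y), and let f(2,i) be the coefficient of Y^{2i} in F_i. Then for every i ≥ 1, 6i · f(2,i) = −(2i+1)!/(2^{i−1} · (i−1)!). -/
import Mathlib

/-- The polynomials `F_0(Y) = Y − 1`, `F_{i+1}(Y) = (Y² − Y)·Y·F_i′(Y)`. -/
noncomputable def F : ℕ → Polynomial ℚ
  | 0 => Polynomial.X - 1
  | i + 1 =>
      (Polynomial.X ^ 2 - Polynomial.X) * (Polynomial.X * Polynomial.derivative (F i))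

open Polynomial

lemma F_succ (i : ℕ) :
    F (i + 1) = X ^ 3 * derivative (F i) - X ^ 2 * derivative (F i) := by
  show (X ^ 2 - X) * (X * derivative (F i)) = _
  ring

lemma F_natDegree (i : ℕ) : (F i).natDegree ≤ 2 * i + 1 := by
  induction i with
  | zero =>
    show (X - 1 : Polynomial ℚ).natDegree ≤ 1
    compute_degree
  | succ i ih =>
    rw [F_succ]
    refine le_trans (natDegree_sub_le _ _) ?_
    have hd : (derivative (F i)).natDegree ≤ 2 * i := by
      refine le_trans (natDegree_derivative_le _) ?_
      omega
    have h1 : (X ^ 3 * derivative (F i)).natDegree ≤ 2 * (i + 1) + 1 := by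
      refine le_trans (natDegree_mul_le) ?_
      simp only [natDegree_X_pow]
      omega
    have h2 : (X ^ 2 * derivative (F i)).natDegree ≤ 2 * (i + 1) + 1 := by
      refine le_trans (natDegree_mul_le) ?_
      simp only [natDegree_X_pow]
      omega
    omega

lemma coeff_F_zero_of_gt (i n : ℕ) (h : 2 * i + 1 < n) : (F i).coeff n = 0 :=
  coeff_eq_zero_of_natDegree_lt (lt_of_le_of_lt (F_natDegree i) h)

lemma coeff_F_succ (i n : ℕ) :
    (F (i + 1)).coeff (n + 3)
      = (n + 1 : ℚ) * (F i).coeff (n + 1) - (n + 2 : ℚ) * (F i).coeff (n + 2) := by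
  rw [F_succ, coeff_sub]
  have h3 : (X ^ 3 * derivative (F i)).coeff (n + 3) = (derivative (F i)).coeff n :=
    coeff_X_pow_mul _ _ _
  have h2 : (X ^ 2 * derivative (F i)).coeff (n + 3) = (derivative (F i)).coeff (n + 1) := by
    have := coeff_X_pow_mul (derivative (F i)) 2 (n + 1)
    simpa [show n + 1 + 2 = n + 3 by ring] using this
  rw [h3, h2, coeff_derivative, coeff_derivative]
  push_cast
  ring

/-- Leading coefficient sequence. -/
def A : ℕ → ℚ
  | 0 => 1
  | i + 1 => (2 * i + 1) * A i

/-- Second coefficient sequence. -/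
def B : ℕ → ℚ
  | 0 => -1
  | i + 1 => 2 * i * B i - (2 * i + 1) * A i

lemma A_succ (n : ℕ) : A (n + 1) = (2 * n + 1) * A n := rfl

lemma B_succ (n : ℕ) : B (n + 1) = 2 * n * B n - (2 * n + 1) * A n := rfl

lemma coeff_F_top (i : ℕ) :
    (F i).coeff (2 * i + 1) = A i ∧ (F i).coeff (2 * i) = B i := by
  induction i with
  | zero =>
    constructor
    · show (X - 1 : Polynomial ℚ).coeff 1 = A 0
      simp [A, coeff_one]
    · show (X - 1 : Polynomial ℚ).coeff 0 = B 0
      simp [B, coeff_one]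
  | succ i ih =>
    obtain ⟨ha, hb⟩ := ih
    have htop : (F (i + 1)).coeff (2 * (i + 1) + 1) = A (i + 1) := by
      have h := coeff_F_succ i (2 * i)
      have hz : (F i).coeff (2 * i + 2) = 0 := coeff_F_zero_of_gt i _ (by omega)
      rw [show 2 * (i + 1) + 1 = 2 * i + 3 by ring, h, ha, hz, A_succ]
      push_cast
      ring
    refine ⟨htop, ?_⟩
    match i with
    | 0 =>
      have hB1 : B 1 = -1 := by rw [B_succ]; simp [A, B]
      show (F 1).coeff 2 = B 1
      rw [hB1, F_succ]
      have hd : derivative (F 0) = 1 := by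
        show derivative (X - 1 : Polynomial ℚ) = 1
        simp
      rw [hd]
      simp [coeff_one]
    | j + 1 =>
      have h := coeff_F_succ (j + 1) (2 * j + 1)
      have e1 : 2 * (j + 1 + 1) = 2 * j + 1 + 3 := by ring
      have e2 : 2 * j + 1 + 1 = 2 * (j + 1) := by ring
      have e3 : 2 * j + 1 + 2 = 2 * (j + 1) + 1 := by ring
      have hBs : B (j + 1 + 1)
          = 2 * ((j:ℚ) + 1) * B (j + 1) - (2 * ((j:ℚ) + 1) + 1) * A (j + 1) := by
        rw [B_succ]; push_cast; ring
      rw [e1, h, e2, e3, ha, hb, hBs]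
      push_cast
      ring

lemma A_eq (i : ℕ) : A i = ((2 * i).factorial : ℚ) / (2 ^ i * (i.factorial : ℚ)) := by
  induction i with
  | zero => simp [A]
  | succ i ih =>
    have h2i : ((2 * (i + 1)).factorial : ℚ)
        = (2 * i + 2) * ((2 * i + 1) * ((2 * i).factorial : ℚ)) := by
      rw [show 2 * (i + 1) = (2 * i + 1) + 1 by ring, Nat.factorial_succ]
      push_cast [Nat.factorial_succ]
      ring
    have hfac : ((i + 1).factorial : ℚ) = (i + 1) * (i.factorial : ℚ) := by
      push_cast [Nat.factorial_succ]; ring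
    rw [A_succ, ih, h2i, hfac]
    have h1 : ((i.factorial : ℚ)) ≠ 0 := by positivity
    have h2 : (2 : ℚ) ^ i ≠ 0 := by positivity
    field_simp
    ring

lemma B_eq (i : ℕ) (hi : 1 ≤ i) : B i = -(2 * i + 1) * A i / 3 := by
  induction i with
  | zero => omega
  | succ i ih =>
    match i, ih with
    | 0, _ =>
      rw [B_succ, A_succ]
      simp [A, B]
      norm_num
    | j + 1, ih =>
      have hb := ih (by omega)
      have hAs : A (j + 1 + 1) = (2 * ((j:ℚ) + 1) + 1) * A (j + 1) := by
        rw [A_succ]; push_cast; ring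
      rw [B_succ, hb, hAs]
      push_cast
      ring

/-- For every `i ≥ 1`, with `f(2,i)` the coefficient of `Y^{2i}` in `F_i`,
`6i · f(2,i) = −(2i+1)!/(2^{i−1} · (i−1)!)`. -/
theorem six_i_f_two (i : ℕ) (hi : 1 ≤ i) :
    (6 * (i : ℚ)) * (F i).coeff (2 * i) =
      -(((2 * i + 1).factorial : ℚ) / (2 ^ (i - 1) * ((i - 1).factorial : ℚ))) := by
  obtain ⟨j, rfl⟩ : ∃ j, i = j + 1 := ⟨i - 1, by omega⟩
  rw [(coeff_F_top (j + 1)).2, B_eq (j + 1) (by omega), A_eq]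
  have hfac1 : ((2 * (j + 1) + 1).factorial : ℚ)
      = (2 * j + 3) * ((2 * (j + 1)).factorial : ℚ) := by
    rw [show 2 * (j + 1) + 1 = (2 * (j + 1)) + 1 from rfl, Nat.factorial_succ]
    push_cast; ring
  have hfac2 : (((j + 1)).factorial : ℚ) = (j + 1) * (j.factorial : ℚ) := by
    push_cast [Nat.factorial_succ]; ring
  rw [hfac1]
  simp only [Nat.add_sub_cancel]
  rw [hfac2]
  have h1 : ((j.factorial : ℚ)) ≠ 0 := by positivity
  have h2 : (2 : ℚ) ^ j ≠ 0 := by positivity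
  have h3 : ((j:ℚ) + 1) ≠ 0 := by positivity
  push_cast
  field_simp
  ring
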